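/- Let λ ∈ ℂ be non-resonant (λ ≠ 0 and λ^{n-1} ≠ 1 for all n ≥ 2), and consider the family f_t(z) = λz + t·φ(z) where φ is a formal power series with φ(z) = O(z²) and t ∈ ℂ. Then the n-th coefficient h_n(t) of the unique formal linearization h_t (with h_t(0)=0, h_t'(0)=1, h_t ∘ f_t = λ h_t) is a polynomial in t of degree at most n − 1. -/

import Mathlib

/-!
Comparing coefficients of `zⁿ` in `h_t ∘ f_t = λ h_t` gives
`(λ - λⁿ) hₙ(t) = ∑_{k<n} hₖ(t) [zⁿ] f_tᵏ`, so the `hₙ` come out of one recursion that can be run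
over `ℂ[t]`, with `f_t` a power series whose coefficients lie in `ℂ[t]`. Give `tʲ zᵐ` the weight
`m - j`. As `φ = O(z²)`, every monomial of `f_t` has weight at least `1`, hence every monomial of
`f_tᵏ` has weight at least `k`, i.e. `[zⁿ] f_tᵏ` has degree at most `n - k` in `t`. Inductively
`hₙ` has degree at most `(k - 1) + (n - k) = n - 1`.
-/

open PowerSeries

/-- Composition of formal power series: `compPS g f` is `g ∘ f`
(substitute `f` into `g`); correct when `f` has zero constant term. -/
noncomputable def compPS (g f : PowerSeries ℂ) : PowerSeries ℂ :=
  PowerSeries.mk fun n =>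
    ∑ k ∈ Finset.range (n + 1), PowerSeries.coeff k g * PowerSeries.coeff n (f ^ k)

open scoped Polynomial

section WeightedOrder

variable {R : Type*} [Semiring R]

/-- Every monomial `tʲ zᵐ` of `G`, with `t` the polynomial variable, has weight `m - j ≥ k`. -/
def WeightedOrderGe (k : ℕ) (G : PowerSeries R[X]) : Prop :=
  ∀ m j, m < k + j → (coeff m G).coeff j = 0

theorem weightedOrderGe_one : WeightedOrderGe 0 (1 : PowerSeries R[X]) := by
  intro m j hmj
  rw [coeff_one]
  split_ifs with hm
  · rw [Polynomial.coeff_one, if_neg (by omega)]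
  · rfl

theorem WeightedOrderGe.mul {a b : ℕ} {F G : PowerSeries R[X]} (hF : WeightedOrderGe a F)
    (hG : WeightedOrderGe b G) : WeightedOrderGe (a + b) (F * G) := by
  intro m j hmj
  rw [coeff_mul, Polynomial.finsetSum_coeff]
  refine Finset.sum_eq_zero fun p hp => ?_
  rw [Polynomial.coeff_mul]
  refine Finset.sum_eq_zero fun q hq => ?_
  rw [Finset.HasAntidiagonal.mem_antidiagonal] at hp hq
  rcases Nat.lt_or_ge p.1 (a + q.1) with h1 | h1
  · rw [hF _ _ h1, zero_mul]
  · rw [hG _ _ (by omega), mul_zero]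

theorem WeightedOrderGe.pow {a : ℕ} {F : PowerSeries R[X]} (hF : WeightedOrderGe a F) (n : ℕ) :
    WeightedOrderGe (n * a) (F ^ n) := by
  induction n with
  | zero => simpa using weightedOrderGe_one
  | succ n ih => simpa [pow_succ, add_mul] using ih.mul hF

theorem WeightedOrderGe.natDegree_coeff_le {k : ℕ} {G : PowerSeries R[X]}
    (hG : WeightedOrderGe k G) (m : ℕ) : (coeff m G).natDegree ≤ m - k :=
  Polynomial.natDegree_le_iff_coeff_eq_zero.2 fun j hj => hG m j (by omega)

end WeightedOrder

section LinearFamily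

variable {R : Type*} [CommSemiring R]

/-- `f_t(z) = λ z + t φ(z)`, with the parameter `t` as the polynomial variable. -/
noncomputable def linearFamily (lam : R) (phi : PowerSeries R) : PowerSeries R[X] :=
  C (Polynomial.C lam) * X + C Polynomial.X * map Polynomial.C phi

theorem map_linearFamily (lam t : R) (phi : PowerSeries R) :
    map (Polynomial.evalRingHom t) (linearFamily lam phi) = lam • X + t • phi := by
  ext n
  simp [linearFamily, coeff_map, coeff_C_mul, mul_comm]

theorem weightedOrderGe_linearFamily (lam : R) {phi : PowerSeries R}
    (hphi0 : constantCoeff phi = 0) (hphi1 : coeff 1 phi = 0) :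
    WeightedOrderGe 1 (linearFamily lam phi) := by
  intro m j hmj
  have h0 : coeff 0 phi = 0 := by rwa [coeff_zero_eq_constantCoeff_apply]
  simp only [linearFamily, map_add, coeff_C_mul, coeff_X, coeff_map, Polynomial.coeff_add]
  rcases j with _ | _ | j
  · obtain rfl : m = 0 := by omega
    simp [h0]
  · obtain rfl | rfl : m = 0 ∨ m = 1 := by omega
    · simp [h0]
    · simp [hphi1]
  · rw [mul_ite, mul_one, mul_zero, Polynomial.coeff_X_mul, Polynomial.coeff_C_succ]
    split_ifs <;> simp [Polynomial.coeff_C_succ]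

theorem coeff_X_mul_pow_self (u : PowerSeries R) (n : ℕ) :
    coeff n ((X * u) ^ n) = constantCoeff u ^ n := by
  simpa [mul_pow, ← map_pow] using coeff_X_pow_mul (u ^ n) n 0

theorem coeff_smul_X_add_smul_pow_self {phi : PowerSeries R}
    (hphi0 : constantCoeff phi = 0) (hphi1 : coeff 1 phi = 0) (lam t : R) (n : ℕ) :
    coeff n ((lam • X + t • phi) ^ n) = lam ^ n := by
  obtain ⟨psi, rfl⟩ := X_dvd_iff.2 hphi0
  have : lam • X + t • (X * psi) = X * (C lam + t • psi) := by
    rw [smul_eq_C_mul, smul_eq_C_mul, smul_eq_C_mul]; ring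
  rw [this, coeff_X_mul_pow_self]
  have hpsi : constantCoeff psi = 0 := by
    rwa [← coeff_zero_eq_constantCoeff_apply, ← coeff_succ_X_mul]
  simp [hpsi]

end LinearFamily

section Linearization

variable {K : Type*} [Field K]

noncomputable def linearizationCoeff (lam : K) (F : PowerSeries K[X]) : ℕ → K[X]
  | 0 => 0
  | 1 => 1
  | n + 2 => Polynomial.C (lam - lam ^ (n + 2))⁻¹ *
      ∑ k : Fin (n + 2), linearizationCoeff lam F k * coeff (n + 2) (F ^ (k : ℕ))

theorem natDegree_linearizationCoeff_le (lam : K) {F : PowerSeries K[X]}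
    (hF : WeightedOrderGe 1 F) (n : ℕ) : (linearizationCoeff lam F n).natDegree ≤ n - 1 := by
  induction n using Nat.strong_induction_on with
  | _ n ih =>
  match n with
  | 0 | 1 => simp [linearizationCoeff]
  | n + 2 =>
    rw [linearizationCoeff]
    refine (Polynomial.natDegree_C_mul_le _ _).trans <|
      Polynomial.natDegree_sum_le_of_forall_le _ _ fun k _ => ?_
    obtain ⟨_ | k, hk⟩ := k
    · simp [linearizationCoeff]
    · have hcoeff := (hF.pow (k + 1)).natDegree_coeff_le (n + 2)
      have hlin := ih (k + 1) hk
      have := Polynomial.natDegree_mul_le (p := linearizationCoeff lam F (k + 1))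
        (q := coeff (n + 2) (F ^ (k + 1)))
      dsimp only
      omega

end Linearization

theorem sub_mul_coeff_eq_sum_of_compPS_eq_smul {g f : PowerSeries ℂ} {lam : ℂ}
    (hgf : compPS g f = lam • g) (n : ℕ) :
    (lam - coeff n (f ^ n)) * coeff n g = ∑ k ∈ Finset.range n, coeff k g * coeff n (f ^ k) := by
  have := congrArg (coeff n) hgf
  rw [compPS, coeff_mk, Finset.sum_range_succ, coeff_smul, smul_eq_mul] at this
  linear_combination -this

theorem eval_linearizationCoeff {lam : ℂ} (hres : ∀ n, 2 ≤ n → lam ^ n ≠ lam)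
    {F : PowerSeries ℂ[X]} {g : PowerSeries ℂ} (t : ℂ) (hg0 : constantCoeff g = 0)
    (hg1 : coeff 1 g = 1) (hdiag : ∀ n, coeff n (map (Polynomial.evalRingHom t) F ^ n) = lam ^ n)
    (hgF : compPS g (map (Polynomial.evalRingHom t) F) = lam • g) (n : ℕ) :
    (linearizationCoeff lam F n).eval t = coeff n g := by
  induction n using Nat.strong_induction_on with
  | _ n ih =>
  match n with
  | 0 => simp [linearizationCoeff, hg0]
  | 1 => simp [linearizationCoeff, hg1]
  | n + 2 =>
    have hrec := sub_mul_coeff_eq_sum_of_compPS_eq_smul hgF (n + 2)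
    rw [hdiag, ← Fin.sum_univ_eq_sum_range] at hrec
    have hne : lam - lam ^ (n + 2) ≠ 0 := sub_ne_zero.2 (hres (n + 2) (by omega)).symm
    rw [linearizationCoeff, Polynomial.eval_mul, Polynomial.eval_C, Polynomial.eval_finsetSum,
      inv_mul_eq_iff_eq_mul₀ hne, hrec]
    refine Finset.sum_congr rfl fun k _ => ?_
    rw [Polynomial.eval_mul, ih k (by omega), ← map_pow, coeff_map, Polynomial.coe_evalRingHom]

/-- For the linear family `f_t = λ z + t φ(z)` with `λ` non-resonant and
`φ = O(z²)`, the `n`-th coefficient of the formal linearization `h_t`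
(`h_t(0)=0`, `h_t'(0)=1`, `h_t ∘ f_t = λ h_t`) is a polynomial in `t`
of degree at most `n - 1`. -/
theorem linearization_coeff_polynomial_in_t (lam : ℂ) (hlam0 : lam ≠ 0)
    (hres : ∀ n : ℕ, 2 ≤ n → lam ^ (n - 1) ≠ 1)
    (phi : PowerSeries ℂ) (hphi0 : PowerSeries.constantCoeff phi = 0)
    (hphi1 : PowerSeries.coeff 1 phi = 0)
    (h : ℂ → PowerSeries ℂ)
    (hh : ∀ t : ℂ,
      PowerSeries.constantCoeff (h t) = 0 ∧ PowerSeries.coeff 1 (h t) = 1 ∧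
        compPS (h t) (lam • PowerSeries.X + t • phi) = lam • h t) :
    ∀ n : ℕ, ∃ P : Polynomial ℂ, P.natDegree ≤ n - 1 ∧
      ∀ t : ℂ, Polynomial.eval t P = PowerSeries.coeff n (h t) := by
  have hpow : ∀ n, 2 ≤ n → lam ^ n ≠ lam := by
    intro n hn hfixed
    refine hres n hn (mul_left_cancel₀ hlam0 ?_)
    rw [mul_one, ← pow_succ', Nat.sub_add_cancel (by omega), hfixed]
  intro n
  refine ⟨linearizationCoeff lam (linearFamily lam phi) n,
    natDegree_linearizationCoeff_le lam (weightedOrderGe_linearFamily lam hphi0 hphi1) n,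
    fun t => ?_⟩
  obtain ⟨hh0, hh1, hcomp⟩ := hh t
  refine eval_linearizationCoeff hpow t hh0 hh1 (fun k => ?_) ?_ n <;> rw [map_linearFamily]
  exacts [coeff_smul_X_add_smul_pow_self hphi0 hphi1 lam t k, hcomp]
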